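/- arXiv:2602.08758 — 2 statements merged into one kernel-verified Lean document; each statement's English description precedes it below -/
import Mathlib

section
/- For a graph G with no isolated vertices, γ_tR(G) = γ_t(G) if and only if G is a disjoint union of copies of K_2. -/
open Finset

/-- A graph has no isolated vertices. -/
def SimpleGraph.IsolateFree {V : Type*} (G : SimpleGraph V) : Prop :=
  ∀ v, ∃ u, G.Adj v u

/-- A Roman dominating function. -/
def SimpleGraph.IsRDF {V : Type*} (G : SimpleGraph V) (f : V → Fin 3) : Prop :=
  ∀ v, f v = 0 → ∃ u, G.Adj v u ∧ f u = 2

/-- A total Roman dominating function. -/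
def SimpleGraph.IsTRDF {V : Type*} (G : SimpleGraph V) (f : V → Fin 3) : Prop :=
  (∀ v, f v = 0 → ∃ u, G.Adj v u ∧ f u = 2) ∧
  (∀ v, f v ≠ 0 → ∃ u, G.Adj v u ∧ f u ≠ 0)

/-- The Roman domination number. -/
noncomputable def SimpleGraph.rdn {V : Type*} [Fintype V] (G : SimpleGraph V) : ℕ :=
  sInf {w | ∃ f : V → Fin 3, G.IsRDF f ∧ w = ∑ v, (f v : ℕ)}

/-- The total Roman domination number. -/
noncomputable def SimpleGraph.trdn {V : Type*} [Fintype V] (G : SimpleGraph V) : ℕ :=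
  sInf {w | ∃ f : V → Fin 3, G.IsTRDF f ∧ w = ∑ v, (f v : ℕ)}

/-- A total dominating set. -/
def SimpleGraph.IsTDS {V : Type*} (G : SimpleGraph V) (S : Finset V) : Prop :=
  ∀ v, ∃ u ∈ S, G.Adj v u

/-- A dominating set. -/
def SimpleGraph.IsDS {V : Type*} (G : SimpleGraph V) (S : Finset V) : Prop :=
  ∀ v, v ∈ S ∨ ∃ u ∈ S, G.Adj v u

/-- The total domination number. -/
noncomputable def SimpleGraph.tdn {V : Type*} [Fintype V] (G : SimpleGraph V) : ℕ :=
  sInf {n | ∃ S : Finset V, G.IsTDS S ∧ n = S.card}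

/-- The domination number. -/
noncomputable def SimpleGraph.dn {V : Type*} [Fintype V] (G : SimpleGraph V) : ℕ :=
  sInf {n | ∃ S : Finset V, G.IsDS S ∧ n = S.card}

/-- The total Roman bondage number, in ℕ∞ (∞ if no valid edge set exists). -/
noncomputable def SimpleGraph.btR {V : Type*} [Fintype V] (G : SimpleGraph V) : ℕ∞ :=
  sInf {n : ℕ∞ | ∃ E' : Finset (Sym2 V), ↑E' ⊆ G.edgeSet ∧
    (G.deleteEdges ↑E').IsolateFree ∧ G.trdn < (G.deleteEdges ↑E').trdn ∧ n = E'.card}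

/-- The total bondage number, in ℕ∞. -/
noncomputable def SimpleGraph.bt {V : Type*} [Fintype V] (G : SimpleGraph V) : ℕ∞ :=
  sInf {n : ℕ∞ | ∃ E' : Finset (Sym2 V), ↑E' ⊆ G.edgeSet ∧
    (G.deleteEdges ↑E').IsolateFree ∧ G.tdn < (G.deleteEdges ↑E').tdn ∧ n = E'.card}

/-- The bondage number, in ℕ∞. -/
noncomputable def SimpleGraph.bond {V : Type*} [Fintype V] (G : SimpleGraph V) : ℕ∞ :=
  sInf {n : ℕ∞ | ∃ E' : Finset (Sym2 V), ↑E' ⊆ G.edgeSet ∧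
    G.dn < (G.deleteEdges ↑E').dn ∧ n = E'.card}

/-- The vertex cover number. -/
noncomputable def SimpleGraph.vcn {V : Type*} [Fintype V] (G : SimpleGraph V) : ℕ :=
  sInf {n | ∃ S : Finset V, (∀ u v, G.Adj u v → u ∈ S ∨ v ∈ S) ∧ n = S.card}

/-- The S-external private neighborhood of v. -/
def SimpleGraph.epn {V : Type*} (G : SimpleGraph V) (v : V) (S : Set V) : Set V :=
  {w | w ∉ S ∧ G.Adj w v ∧ ∀ x ∈ S, G.Adj w x → x = v}


/-!
The support of a total Roman dominating function `f` is a total dominating set, and the weight of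
`f` is the size of its support plus the number of vertices labelled `2`. Hence `γ_t ≤ γ_tR`, and
equality forces a minimum total Roman dominating function to be the constant `1`, so that
`γ_t(G) = |V|`. But a vertex with two neighbours lets one drop a vertex `x` from `V` (a vertex whose
only neighbour is that vertex, if there is one, otherwise the vertex itself), so `γ_t(G) < |V|`.
Conversely, in a perfect matching every vertex is the only neighbour of its partner, so every total
dominating set is `V`, while the constant `1` is a total Roman dominating function of weight `|V|`.
-/

theorem sum_val_eq_card_ne_zero_add_card_eq_two {V : Type*} [Fintype V] (f : V → Fin 3) :
    ∑ v, (f v : ℕ) = #{v | f v ≠ 0} + #{v | f v = 2} := by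
  rw [card_filter, card_filter, ← sum_add_distrib]
  refine sum_congr rfl fun v _ => ?_
  generalize f v = a
  fin_cases a <;> rfl

namespace SimpleGraph

variable {V : Type*} {G : SimpleGraph V}

theorem isTRDF_one (hG : G.IsolateFree) : G.IsTRDF 1 :=
  ⟨fun _ h => absurd h one_ne_zero, fun v _ => (hG v).imp fun _ hu => ⟨hu, one_ne_zero⟩⟩

theorem IsTRDF.ne_zero_of_forall_ne_two {f : V → Fin 3} (hf : G.IsTRDF f) (h : ∀ v, f v ≠ 2)
    (v : V) : f v ≠ 0 := fun hv =>
  let ⟨u, _, hu⟩ := hf.1 v hv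
  h u hu

variable [Fintype V]

theorem tdn_le_card_of_isTDS {S : Finset V} (hS : G.IsTDS S) : G.tdn ≤ #S :=
  Nat.sInf_le ⟨S, hS, rfl⟩

theorem isTDS_univ_erase [DecidableEq V] {x : V} (hx : ∀ y, ∃ z, G.Adj y z ∧ z ≠ x) :
    G.IsTDS (univ.erase x) := by
  intro y
  obtain ⟨z, hyz, hzx⟩ := hx y
  exact ⟨z, mem_erase.mpr ⟨hzx, mem_univ z⟩, hyz⟩

theorem exists_forall_exists_adj_ne (hG : G.IsolateFree) {v u w : V} (hu : G.Adj v u)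
    (hw : G.Adj v w) (huw : u ≠ w) : ∃ x, ∀ y, ∃ z, G.Adj y z ∧ z ≠ x := by
  by_cases hpendant : ∃ x, ∀ y, G.Adj x y → y = v
  · obtain ⟨x, hx⟩ := hpendant
    refine ⟨x, fun y => ?_⟩
    by_cases hyv : y = v
    · subst hyv
      by_cases hux : u = x
      · exact ⟨w, hw, fun hwx => huw (hux.trans hwx.symm)⟩
      · exact ⟨u, hu, hux⟩
    · obtain ⟨z, hyz⟩ := hG y
      exact ⟨z, hyz, fun hzx => hyv (hx y (hzx ▸ hyz.symm))⟩
  · push Not at hpendant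
    exact ⟨v, hpendant⟩

theorem tdn_lt_card (hG : G.IsolateFree) {v u w : V} (hu : G.Adj v u) (hw : G.Adj v w)
    (huw : u ≠ w) : G.tdn < Fintype.card V := by
  classical
  obtain ⟨x, hx⟩ := exists_forall_exists_adj_ne hG hu hw huw
  calc G.tdn ≤ #(univ.erase x) := tdn_le_card_of_isTDS (isTDS_univ_erase hx)
    _ < #(univ : Finset V) := card_erase_lt_of_mem (mem_univ x)
    _ = Fintype.card V := card_univ

theorem IsTDS.eq_univ {S : Finset V} (hS : G.IsTDS S) (h : ∀ v, ∃! u, G.Adj v u) : S = univ := by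
  refine eq_univ_of_forall fun x => ?_
  obtain ⟨y, hxy, -⟩ := h x
  obtain ⟨z, hzS, hyz⟩ := hS y
  obtain rfl : z = x := (h y).unique hyz hxy.symm
  exact hzS

theorem tdn_eq_card (hG : G.IsolateFree) (h : ∀ v, ∃! u, G.Adj v u) :
    G.tdn = Fintype.card V := by
  have huniv : G.IsTDS univ := fun v => (hG v).imp fun u hu => ⟨mem_univ u, hu⟩
  obtain ⟨S, hS, hcard⟩ := Nat.sInf_mem (⟨_, univ, huniv, rfl⟩ :
    {n | ∃ S : Finset V, G.IsTDS S ∧ n = #S}.Nonempty)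
  rw [tdn, hcard, hS.eq_univ h, card_univ]

theorem isTDS_support {f : V → Fin 3} (hf : G.IsTRDF f) : G.IsTDS {v | f v ≠ 0} := by
  intro v
  by_cases hv : f v = 0
  · obtain ⟨u, hvu, hu⟩ := hf.1 v hv
    exact ⟨u, by simp [hu], hvu⟩
  · obtain ⟨u, hvu, hu⟩ := hf.2 v hv
    exact ⟨u, by simp [hu], hvu⟩

theorem exists_isTRDF_sum_eq_trdn (hG : G.IsolateFree) :
    ∃ f : V → Fin 3, G.IsTRDF f ∧ ∑ v, (f v : ℕ) = G.trdn := by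
  obtain ⟨f, hf, hsum⟩ := Nat.sInf_mem (⟨_, 1, isTRDF_one hG, rfl⟩ :
    {w | ∃ f : V → Fin 3, G.IsTRDF f ∧ w = ∑ v, (f v : ℕ)}.Nonempty)
  exact ⟨f, hf, hsum.symm⟩

theorem trdn_le_card (hG : G.IsolateFree) : G.trdn ≤ Fintype.card V :=
  Nat.sInf_le ⟨1, isTRDF_one hG, by simp⟩

end SimpleGraph

theorem stmt_4 {V : Type*} [Fintype V] (G : SimpleGraph V) (hG : G.IsolateFree) :
    G.trdn = G.tdn ↔ ∀ v, ∃! u, G.Adj v u := by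
  classical
  obtain ⟨f, hf, hsum⟩ := G.exists_isTRDF_sum_eq_trdn hG
  have hweight := sum_val_eq_card_ne_zero_add_card_eq_two f
  have htdn : G.tdn ≤ #{v | f v ≠ 0} := G.tdn_le_card_of_isTDS (G.isTDS_support hf)
  constructor
  · intro h v
    obtain ⟨u, hu⟩ := hG v
    refine ⟨u, hu, fun w hw => ?_⟩
    by_contra hwu
    have hno_two : ∀ x, f x ≠ 2 := by
      have : #{x | f x = 2} = 0 := by omega
      simpa [filter_eq_empty_iff] using this
    have hsupp : #{x | f x ≠ 0} = Fintype.card V := by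
      rw [filter_true_of_mem fun x _ => hf.ne_zero_of_forall_ne_two hno_two x, card_univ]
    have := G.tdn_lt_card hG hu hw (Ne.symm hwu)
    omega
  · intro h
    have := G.tdn_eq_card hG h
    have := G.trdn_le_card hG
    omega
end

section
/- Let G be a graph with no isolated vertices and finite total Roman bondage number. Then b_tR(G) = 1 if and only if G has an edge uv such that G − uv has no isolated vertices and every minimum-weight total Roman dominating function f = (V_0, V_1, V_2) on G satisfies: (i) the subgraph induced by V_1 ∪ V_2 minus the edge uv has an isolated vertex, or (ii) u ∈ V_2 and v ∈ epn(u, V_2) ∩ V_0, or v ∈ V_2 and u ∈ epn(v, V_2) ∩ V_0. -/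
open Finset

lemma trdf_set_nonempty {V : Type*} [Fintype V] (G : SimpleGraph V) (hG : G.IsolateFree) :
    {w | ∃ f : V → Fin 3, G.IsTRDF f ∧ w = ∑ v, (f v : ℕ)}.Nonempty := by
  have hf : G.IsTRDF (fun _ => 2) := by
    constructor
    · intro v h; simp at h
    · intro v _; obtain ⟨u, hu⟩ := hG v; exact ⟨u, hu, by simp⟩
  exact ⟨_, _, hf, rfl⟩

lemma trdn_attained {V : Type*} [Fintype V] (G : SimpleGraph V) (hG : G.IsolateFree) :
    ∃ f : V → Fin 3, G.IsTRDF f ∧ G.trdn = ∑ v, (f v : ℕ) :=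
  Nat.sInf_mem (trdf_set_nonempty G hG)

lemma trdn_le_weight {V : Type*} [Fintype V] (G : SimpleGraph V) (f : V → Fin 3)
    (hf : G.IsTRDF f) : G.trdn ≤ ∑ v, (f v : ℕ) :=
  Nat.sInf_le ⟨f, hf, rfl⟩

lemma istrdf_mono {V : Type*} {G H : SimpleGraph V} (h : H ≤ G) (f : V → Fin 3)
    (hf : H.IsTRDF f) : G.IsTRDF f := by
  refine ⟨fun v hv => ?_, fun v hv => ?_⟩
  · obtain ⟨u, hu, h2⟩ := hf.1 v hv; exact ⟨u, h hu, h2⟩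
  · obtain ⟨u, hu, h2⟩ := hf.2 v hv; exact ⟨u, h hu, h2⟩

lemma fin3_two_ne_zero : (2 : Fin 3) ≠ 0 := by decide

lemma key_iff {V : Type*} [Fintype V] (G : SimpleGraph V) (u v : V) (huv : G.Adj u v)
    (hD : (G.deleteEdges {s(u,v)}).IsolateFree) :
    G.trdn < (G.deleteEdges {s(u,v)}).trdn ↔
      ∀ f : V → Fin 3, G.IsTRDF f → (∑ w, (f w : ℕ)) = G.trdn →
        ((∃ w, f w ≠ 0 ∧ ∀ x, f x ≠ 0 → ¬ (G.deleteEdges {s(u, v)}).Adj w x) ∨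
         (f u = 2 ∧ v ∈ G.epn u {x | f x = 2} ∧ f v = 0) ∨
         (f v = 2 ∧ u ∈ G.epn v {x | f x = 2} ∧ f u = 0)) := by
  set D := G.deleteEdges {s(u,v)} with hDdef
  have hle : D ≤ G := SimpleGraph.deleteEdges_le _
  have hne : u ≠ v := huv.ne
  constructor
  · intro hlt f hf hw
    have hnot : ¬ D.IsTRDF f := by
      intro hDf
      have := trdn_le_weight D f hDf
      omega
    rw [SimpleGraph.IsTRDF, not_and_or] at hnot
    push_neg at hnot
    rcases hnot with ⟨w, hw0, hall⟩ | ⟨w, hw0, hall⟩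
    · -- w has f w = 0 but no D-neighbor with value 2
      obtain ⟨x, hadj, hx2⟩ := hf.1 w hw0
      have hnd : ¬ D.Adj w x := fun h => (hall x h) hx2
      rw [hDdef, SimpleGraph.deleteEdges_adj] at hnd
      push_neg at hnd
      have hmem := hnd hadj
      simp only [Set.mem_singleton_iff, Sym2.eq_iff] at hmem
      rcases hmem with ⟨rfl, rfl⟩ | ⟨rfl, rfl⟩
      · -- w = u, x = v : f u = 0, f v = 2  → case (iii)
        refine Or.inr (Or.inr ⟨hx2, ⟨?_, huv, ?_⟩, hw0⟩)
        · simp only [Set.mem_setOf_eq, hw0]; decide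
        · intro y hy hadjy
          by_contra hyx
          have hDy : D.Adj w y := by
            rw [hDdef, SimpleGraph.deleteEdges_adj]
            refine ⟨hadjy, ?_⟩
            intro hmem
            rw [Set.mem_singleton_iff, Sym2.eq_iff] at hmem
            rcases hmem with ⟨h1, h2⟩ | ⟨h1, h2⟩
            · exact hyx h2
            · exact hne h1
          exact (hall y hDy) hy
      · -- w = v, x = u : f v = 0, f u = 2  → case (ii)
        refine Or.inr (Or.inl ⟨hx2, ⟨?_, huv.symm, ?_⟩, hw0⟩)
        · simp only [Set.mem_setOf_eq, hw0]; decide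
        · intro y hy hadjy
          by_contra hyx
          have hDy : D.Adj w y := by
            rw [hDdef, SimpleGraph.deleteEdges_adj]
            refine ⟨hadjy, ?_⟩
            intro hmem
            rw [Set.mem_singleton_iff, Sym2.eq_iff] at hmem
            rcases hmem with ⟨h1, h2⟩ | ⟨h1, h2⟩
            · exact hne h1.symm
            · exact hyx h2
          exact (hall y hDy) hy
    · exact Or.inl ⟨w, hw0, fun x hx hadj => hx (hall x hadj)⟩
  · intro hchar
    have hle' : G.trdn ≤ D.trdn := by
      obtain ⟨g, hg, hgw⟩ := trdn_attained D hD
      rw [hgw]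
      exact trdn_le_weight G g (istrdf_mono hle g hg)
    rcases lt_or_eq_of_le hle' with h | heq
    · exact h
    · exfalso
      obtain ⟨g, hg, hgw⟩ := trdn_attained D hD
      have hgG : G.IsTRDF g := istrdf_mono hle g hg
      have hmin : (∑ w, (g w : ℕ)) = G.trdn := by omega
      rcases hchar g hgG hmin with ⟨w, hw0, hall⟩ | ⟨hu2, ⟨_, _, hpriv⟩, hv0⟩ |
        ⟨hv2, ⟨_, _, hpriv⟩, hu0⟩
      · obtain ⟨x, hadj, hx0⟩ := hg.2 w hw0
        exact hall x hx0 hadj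
      · obtain ⟨x, hadj, hx2⟩ := hg.1 v hv0
        have hxu : x = u := hpriv x hx2 (hle hadj)
        subst hxu
        rw [hDdef, SimpleGraph.deleteEdges_adj] at hadj
        exact hadj.2 (by simp [Sym2.eq_swap])
      · obtain ⟨x, hadj, hx2⟩ := hg.1 u hu0
        have hxv : x = v := hpriv x hx2 (hle hadj)
        subst hxv
        rw [hDdef, SimpleGraph.deleteEdges_adj] at hadj
        exact hadj.2 (by simp)

theorem stmt_18 {V : Type*} [Fintype V] (G : SimpleGraph V) (hG : G.IsolateFree)
    (hfin : G.btR ≠ ⊤) :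
    G.btR = 1 ↔ ∃ u v, G.Adj u v ∧ (G.deleteEdges {s(u, v)}).IsolateFree ∧
      ∀ f : V → Fin 3, G.IsTRDF f → (∑ w, (f w : ℕ)) = G.trdn →
        ((∃ w, f w ≠ 0 ∧ ∀ x, f x ≠ 0 → ¬ (G.deleteEdges {s(u, v)}).Adj w x) ∨
         (f u = 2 ∧ v ∈ G.epn u {x | f x = 2} ∧ f v = 0) ∨
         (f v = 2 ∧ u ∈ G.epn v {x | f x = 2} ∧ f u = 0)) := by
  set S : Set ℕ∞ := {n : ℕ∞ | ∃ E' : Finset (Sym2 V), ↑E' ⊆ G.edgeSet ∧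
    (G.deleteEdges ↑E').IsolateFree ∧ G.trdn < (G.deleteEdges ↑E').trdn ∧ n = E'.card}
    with hSdef
  have hbtR : G.btR = sInf S := rfl
  constructor
  · intro h1
    have hS : S.Nonempty := by
      by_contra hemp
      rw [Set.not_nonempty_iff_eq_empty] at hemp
      rw [hbtR, hemp, sInf_empty] at h1
      exact (by simp : (⊤ : ℕ∞) ≠ 1) h1
    have hmem : (1 : ℕ∞) ∈ S := by
      have := csInf_mem hS
      rwa [← hbtR, h1] at this
    obtain ⟨E', hsub, hiso, hlt, hcard⟩ := hmem
    have hcard1 : E'.card = 1 := by exact_mod_cast hcard.symm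
    obtain ⟨e, he⟩ := Finset.card_eq_one.mp hcard1
    subst he
    induction e using Sym2.ind with
    | _ u v =>
      rw [Finset.coe_singleton] at hsub hiso hlt
      have hadj : G.Adj u v := G.mem_edgeSet.mp (hsub (Set.mem_singleton _))
      exact ⟨u, v, hadj, hiso, (key_iff G u v hadj hiso).mp hlt⟩
  · rintro ⟨u, v, hadj, hiso, hchar⟩
    have hlt := (key_iff G u v hadj hiso).mpr hchar
    have h1mem : (1 : ℕ∞) ∈ S := by
      refine ⟨{s(u,v)}, ?_, ?_, ?_, by simp⟩
      · rw [Finset.coe_singleton]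
        exact Set.singleton_subset_iff.mpr (G.mem_edgeSet.mpr hadj)
      · rwa [Finset.coe_singleton]
      · rwa [Finset.coe_singleton]
    rw [hbtR]
    refine le_antisymm (sInf_le h1mem) (le_sInf ?_)
    rintro b ⟨E', hsub, hiso', hlt', hb⟩
    rcases Nat.eq_zero_or_pos E'.card with h0 | hpos
    · exfalso
      rw [Finset.card_eq_zero] at h0
      subst h0
      simp only [Finset.coe_empty, SimpleGraph.deleteEdges_empty] at hlt'
      omega
    · rw [hb]
      exact_mod_cast hpos
end
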